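/- Let γ > 1 and α ∈ ℝ with α + γ > 0, let F_{α,γ} be the lacunary comb, and define G(x) = ∫_0^x F_{α,γ}(t) dt (so G(x) = 0 for x ≤ 0). Then the Hölder exponent of G at 0 equals α + γ. -/

import Mathlib

open MeasureTheory

/-- `X ∈ C^α(x0)`. -/
def HolderAt (X : ℝ → ℝ) (x0 α : ℝ) : Prop :=
  ∃ C : ℝ, 0 < C ∧ ∃ P : Polynomial ℝ,
    (P = 0 ∨ (P.natDegree : ℝ) < α) ∧
    ∃ δ : ℝ, 0 < δ ∧ ∀ x : ℝ, |x - x0| < δ → |X x - P.eval x| ≤ C * |x - x0| ^ α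

/-- The Hölder exponent of `X` at `x0`: `h(x0) = sup {α ≥ 0 : X ∈ C^α(x0)}`. -/
noncomputable def holderExponent (X : ℝ → ℝ) (x0 : ℝ) : EReal :=
  sSup (Real.toEReal '' {α : ℝ | 0 ≤ α ∧ HolderAt X x0 α})

/-- The lacunary comb `F_{α,γ}`. -/
noncomputable def comb (α γ : ℝ) (x : ℝ) : ℝ :=
  ∑' j : ℕ,
    if 1 ≤ j ∧ (2 : ℝ) ^ (-(j : ℝ)) ≤ x ∧ x ≤ (2 : ℝ) ^ (-(j : ℝ)) + (2 : ℝ) ^ (-γ * (j : ℝ))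
    then (2 : ℝ) ^ (-α * (j : ℝ)) else 0

/-!
The comb vanishes on `(-∞, 0]`, hence so does `G`. For `x > 0`, `G x` is the sum of the masses
`2^{-αj} |I_j ∩ (0, x]|` of the teeth `I_j = [2^{-j}, 2^{-j} + 2^{-γj}]`. Each mass is at most `ρ^j`
with `ρ = 2^{-(α+γ)} < 1`, and only the teeth with `2^{-j} ≤ x` contribute, so
`G x ≤ x^{α+γ} / (1 - ρ)`: `G ∈ C^{α+γ}(0)` with the zero polynomial.

Conversely, a polynomial `P` with `deg P < β` and `|P x| ≤ C |x|^β` to the left of `0`, where `G`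
vanishes, must be zero, so `G ∈ C^β(0)` would give `G x ≤ C x^β` near `0`. At the right end
`x_j = 2^{-j} + 2^{-γj} ≤ 2^{1-j}` of the `j`-th tooth the whole tooth has been
swept, so `ρ^j ≤ G x_j ≤ C 2^β 2^{-βj}`, which fails for large `j` when `β > α + γ`.
-/

open Set Filter Topology Polynomial

theorem holderExponent_eq_of_holderAt {X : ℝ → ℝ} {x₀ a : ℝ} (ha : 0 ≤ a)
    (hX : HolderAt X x₀ a) (hmax : ∀ β, a < β → ¬HolderAt X x₀ β) :
    holderExponent X x₀ = a := by
  refine le_antisymm (sSup_le ?_) (le_sSup ⟨a, ⟨ha, hX⟩, rfl⟩)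
  rintro _ ⟨β, ⟨-, hβ⟩, rfl⟩
  exact EReal.coe_le_coe_iff.2 (not_lt.1 fun h => hmax β h hβ)

theorem ContinuousAt.eq_zero_of_abs_le_rpow {f : ℝ → ℝ} {l : Filter ℝ} [l.NeBot]
    (hl : l ≤ 𝓝 0) (hf : ContinuousAt f 0) {C β : ℝ} (hβ : 0 < β)
    (hbound : ∀ᶠ x in l, |f x| ≤ C * |x| ^ β) : f 0 = 0 := by
  have hlim : Tendsto (fun x : ℝ => C * |x| ^ β) l (𝓝 0) := by
    have : ContinuousAt (fun x : ℝ => C * |x| ^ β) 0 :=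
      continuousAt_const.mul (continuous_abs.continuousAt.rpow_const (Or.inr hβ.le))
    simpa [Real.zero_rpow hβ.ne'] using this.tendsto.mono_left hl
  exact abs_nonpos_iff.1 (le_of_tendsto_of_tendsto ((hf.tendsto.mono_left hl).abs) hlim hbound)

theorem Polynomial.eq_zero_of_abs_eval_le_rpow {P : ℝ[X]} {l : Filter ℝ} [l.NeBot]
    (hl : l ≤ 𝓝[≠] 0) {C β : ℝ} (hdeg : (P.natDegree : ℝ) < β)
    (hbound : ∀ᶠ x in l, |P.eval x| ≤ C * |x| ^ β) : P = 0 := by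
  by_contra hP
  obtain ⟨Q, hPQ, hQ⟩ := P.exists_eq_pow_rootMultiplicity_mul_and_not_dvd hP 0
  set k := P.rootMultiplicity 0
  simp only [map_zero, sub_zero] at hPQ hQ
  have hk : (k : ℝ) < β := by
    have : k ≤ P.natDegree := by
      simpa using natDegree_le_of_dvd (Dvd.intro Q hPQ.symm) hP
    exact lt_of_le_of_lt (by exact_mod_cast this) hdeg
  -- dividing the bound by `|x| ^ k` leaves `|Q x| ≤ C |x| ^ (β - k)`, forcing `Q 0 = 0`
  refine hQ (X_dvd_iff.2 ?_)
  rw [coeff_zero_eq_eval_zero]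
  refine Q.continuous.continuousAt.eq_zero_of_abs_le_rpow (C := C) (hl.trans nhdsWithin_le_nhds)
    (sub_pos.2 hk) ?_
  filter_upwards [hbound, hl self_mem_nhdsWithin] with x hx hx0
  have hpos : 0 < |x| ^ k := pow_pos (abs_pos.2 hx0) k
  rw [hPQ, eval_mul, eval_pow, eval_X, abs_mul, abs_pow] at hx
  rw [Real.rpow_sub (abs_pos.2 hx0), Real.rpow_natCast, mul_div_assoc', le_div_iff₀ hpos]
  linarith

theorem HolderAt.exists_abs_le_of_eventuallyEq_zero {X : ℝ → ℝ} {β : ℝ} (hX : HolderAt X 0 β)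
    (h0 : X =ᶠ[𝓝[<] 0] 0) : ∃ C δ, 0 < δ ∧ ∀ x, |x| < δ → |X x| ≤ C * |x| ^ β := by
  obtain ⟨C, -, P, hP, δ, hδ, hbound⟩ := hX
  simp only [sub_zero] at hbound
  suffices P = 0 by subst this; exact ⟨C, δ, hδ, by simpa using hbound⟩
  rcases hP with hP | hdeg
  · exact hP
  refine eq_zero_of_abs_eval_le_rpow (C := C) (nhdsLT_le_nhdsNE 0) hdeg ?_
  filter_upwards [h0, nhdsWithin_le_nhds (Ioo_mem_nhds (neg_neg_iff_pos.2 hδ) hδ)] with x hx hxδ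
  simpa [hx, abs_lt] using hbound x (abs_lt.2 hxδ)

theorem hasSum_integral_tsum_indicator_const {Ω ι : Type*} [MeasurableSpace Ω] [Countable ι]
    {μ : Measure Ω} {s : ι → Set Ω} (hs : ∀ j, MeasurableSet (s j)) (hfin : ∀ j, μ (s j) ≠ ⊤)
    {c : ι → ℝ} (hc : 0 ≤ c) (hsum : Summable fun j => c j * μ.real (s j)) :
    HasSum (fun j => c j * μ.real (s j)) (∫ x, ∑' j, (s j).indicator (fun _ => c j) x ∂μ) := by
  have hint : ∀ j, ∫ x, (s j).indicator (fun _ => c j) x ∂μ = c j * μ.real (s j) := fun j => by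
    rw [integral_indicator_const _ (hs j), smul_eq_mul, mul_comm]
  simp_rw [← hint]
  refine hasSum_integral_of_summable_integral_norm
    (fun j => (integrable_indicator_iff (hs j)).2 (integrableOn_const (hfin j))) ?_
  convert hsum using 2 with j
  simp_rw [norm_indicator_eq_indicator_norm, Real.norm_of_nonneg (hc j), hint]

def tooth (γ : ℝ) (j : ℕ) : Set ℝ :=
  if 1 ≤ j then Icc (2 ^ (-(j : ℝ))) (2 ^ (-(j : ℝ)) + 2 ^ (-γ * j)) else ∅

theorem comb_eq_tsum_indicator (α γ t : ℝ) :
    comb α γ t = ∑' j : ℕ, (tooth γ j).indicator (fun _ => (2 : ℝ) ^ (-α * j)) t := by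
  refine tsum_congr fun j => ?_
  by_cases hj : 1 ≤ j <;> simp [tooth, hj, indicator_apply]

theorem tooth_subset_Icc (γ : ℝ) (j : ℕ) :
    tooth γ j ⊆ Icc (2 ^ (-(j : ℝ))) (2 ^ (-(j : ℝ)) + 2 ^ (-γ * j)) := by
  unfold tooth
  split_ifs
  exacts [subset_rfl, empty_subset _]

theorem measurableSet_tooth (γ : ℝ) (j : ℕ) : MeasurableSet (tooth γ j) := by
  unfold tooth
  split_ifs
  exacts [measurableSet_Icc, MeasurableSet.empty]

theorem volume_tooth_ne_top (γ : ℝ) (j : ℕ) : volume (tooth γ j) ≠ ⊤ :=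
  measure_ne_top_of_subset (tooth_subset_Icc γ j) measure_Icc_lt_top.ne

theorem volume_real_tooth_le (γ : ℝ) (j : ℕ) : volume.real (tooth γ j) ≤ 2 ^ (-γ * j) := by
  refine (measureReal_mono (tooth_subset_Icc γ j) measure_Icc_lt_top.ne).trans ?_
  rw [Real.volume_real_Icc, add_sub_cancel_left, max_eq_left (by positivity)]

noncomputable def toothMass (α γ x : ℝ) (j : ℕ) : ℝ :=
  2 ^ (-α * j) * volume.real (tooth γ j ∩ Ioc 0 x)

theorem toothMass_nonneg (α γ x : ℝ) (j : ℕ) : 0 ≤ toothMass α γ x j := by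
  unfold toothMass
  positivity

noncomputable def combPrimitive (α γ x : ℝ) : ℝ := ∫ t in (0 : ℝ)..x, comb α γ t

theorem comb_of_nonpos (α γ : ℝ) {t : ℝ} (ht : t ≤ 0) : comb α γ t = 0 := by
  rw [comb_eq_tsum_indicator]
  refine (tsum_congr fun j => indicator_of_notMem (fun htj => ?_) _).trans tsum_zero
  exact ht.not_gt ((tooth_subset_Icc γ j htj).1.trans_lt' (by positivity))

theorem combPrimitive_of_nonpos (α γ : ℝ) {x : ℝ} (hx : x ≤ 0) : combPrimitive α γ x = 0 := by
  rw [combPrimitive, intervalIntegral.integral_of_ge hx, neg_eq_zero]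
  exact setIntegral_eq_zero_of_forall_eq_zero fun t ht => comb_of_nonpos α γ ht.2

theorem two_rpow_mul_two_rpow (α γ : ℝ) (j : ℕ) :
    (2 : ℝ) ^ (-α * j) * 2 ^ (-γ * j) = ((2 : ℝ) ^ (-(α + γ))) ^ j := by
  rw [← Real.rpow_add two_pos, ← Real.rpow_mul_natCast zero_le_two]
  ring_nf

theorem toothMass_le (α γ x : ℝ) (j : ℕ) : toothMass α γ x j ≤ ((2 : ℝ) ^ (-(α + γ))) ^ j := by
  rw [toothMass, ← two_rpow_mul_two_rpow]
  gcongr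
  exact (measureReal_mono inter_subset_left (volume_tooth_ne_top γ j)).trans
    (volume_real_tooth_le γ j)

theorem hasSum_combPrimitive {α γ x : ℝ} (h : 0 < α + γ) (hx : 0 ≤ x) :
    HasSum (toothMass α γ x) (combPrimitive α γ x) := by
  have hρ : (2 : ℝ) ^ (-(α + γ)) < 1 := Real.rpow_lt_one_of_one_lt_of_neg one_lt_two (by linarith)
  have hsum : Summable (toothMass α γ x) :=
    (summable_geometric_of_lt_one (by positivity) hρ).of_nonneg_of_le (toothMass_nonneg α γ x)
      (toothMass_le α γ x)
  have hmass : toothMass α γ x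
      = fun j : ℕ => 2 ^ (-α * j) * (volume.restrict (Ioc 0 x)).real (tooth γ j) :=
    funext fun j => by rw [toothMass, measureReal_restrict_apply (measurableSet_tooth γ j)]
  rw [hmass] at hsum ⊢
  rw [combPrimitive, intervalIntegral.integral_of_le hx]
  simp_rw [comb_eq_tsum_indicator]
  refine hasSum_integral_tsum_indicator_const (measurableSet_tooth γ)
    (fun j => ?_) (fun j => by positivity) hsum
  exact ne_top_of_le_ne_top (volume_tooth_ne_top γ j) (Measure.restrict_apply_le _ _)

theorem combPrimitive_nonneg {α γ x : ℝ} (h : 0 < α + γ) (hx : 0 ≤ x) :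
    0 ≤ combPrimitive α γ x :=
  (hasSum_combPrimitive h hx).nonneg (toothMass_nonneg α γ x)

theorem combPrimitive_le {α γ x : ℝ} (h : 0 < α + γ) (hx : 0 < x) :
    combPrimitive α γ x ≤ (1 - (2 : ℝ) ^ (-(α + γ)))⁻¹ * x ^ (α + γ) := by
  set ρ : ℝ := 2 ^ (-(α + γ)) with hρ_def
  have hρ : ρ < 1 := Real.rpow_lt_one_of_one_lt_of_neg one_lt_two (by linarith)
  have hex : ∃ n : ℕ, (2 : ℝ) ^ (-(n : ℝ)) ≤ x := by
    obtain ⟨n, hn⟩ := exists_pow_lt_of_lt_one hx (one_half_lt_one : (1 / 2 : ℝ) < 1)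
    exact ⟨n, by simpa [Real.rpow_neg_natCast] using hn.le⟩
  set j₀ := Nat.find hex
  have hvanish : ∀ j < j₀, toothMass α γ x j = 0 := by
    intro j hj
    have hxj : x < 2 ^ (-(j : ℝ)) := not_le.1 (Nat.find_min hex hj)
    have : tooth γ j ∩ Ioc 0 x = ∅ :=
      eq_empty_of_forall_notMem fun t ht => (ht.2.2.trans_lt hxj).not_ge
        (tooth_subset_Icc γ j ht.1).1
    simp [toothMass, this]
  have hsum := (hasSum_nat_add_iff' j₀).2 (hasSum_combPrimitive h hx.le)
  rw [Finset.sum_eq_zero fun j hj => hvanish j (Finset.mem_range.1 hj), sub_zero] at hsum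
  have hgeom : HasSum (fun n => ρ ^ (n + j₀)) (ρ ^ j₀ * (1 - ρ)⁻¹) := by
    simpa [pow_add, mul_comm] using (hasSum_geometric_of_lt_one (by positivity) hρ).mul_left (ρ ^ j₀)
  have hρj₀ : ρ ^ j₀ ≤ x ^ (α + γ) := by
    rw [hρ_def, ← Real.rpow_mul_natCast zero_le_two, neg_mul, ← mul_neg, mul_comm,
      Real.rpow_mul zero_le_two]
    exact Real.rpow_le_rpow (by positivity) (Nat.find_spec hex) h.le
  calc combPrimitive α γ x ≤ ρ ^ j₀ * (1 - ρ)⁻¹ :=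
        hasSum_le (fun n => toothMass_le α γ x (n + j₀)) hsum hgeom
    _ ≤ (1 - ρ)⁻¹ * x ^ (α + γ) := by
        rw [mul_comm]
        gcongr

theorem pow_le_combPrimitive {α γ : ℝ} (h : 0 < α + γ) {j : ℕ} (hj : 1 ≤ j) :
    ((2 : ℝ) ^ (-(α + γ))) ^ j ≤ combPrimitive α γ (2 ^ (-(j : ℝ)) + 2 ^ (-γ * j)) := by
  have hfull : tooth γ j ∩ Ioc 0 (2 ^ (-(j : ℝ)) + 2 ^ (-γ * j))
      = Icc (2 ^ (-(j : ℝ))) (2 ^ (-(j : ℝ)) + 2 ^ (-γ * j)) := by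
    rw [tooth, if_pos hj, inter_eq_left]
    exact fun t ht => ⟨ht.1.trans_lt' (by positivity), ht.2⟩
  refine le_of_eq_of_le ?_ (le_hasSum (hasSum_combPrimitive h (by positivity)) j
    fun i _ => toothMass_nonneg _ _ _ i)
  rw [toothMass, hfull, Real.volume_real_Icc, add_sub_cancel_left, max_eq_left (by positivity),
    two_rpow_mul_two_rpow]

theorem holderAt_combPrimitive {α γ : ℝ} (h : 0 < α + γ) :
    HolderAt (combPrimitive α γ) 0 (α + γ) := by
  have hρ : (2 : ℝ) ^ (-(α + γ)) < 1 := Real.rpow_lt_one_of_one_lt_of_neg one_lt_two (by linarith)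
  refine ⟨_, inv_pos.2 (sub_pos.2 hρ), 0, Or.inl rfl, 1, one_pos, fun x _ => ?_⟩
  rw [eval_zero, sub_zero, sub_zero]
  rcases le_or_gt x 0 with hx | hx
  · rw [combPrimitive_of_nonpos α γ hx, abs_zero]
    have := hρ.le
    positivity
  · rw [abs_of_nonneg (combPrimitive_nonneg h hx.le), abs_of_pos hx]
    exact combPrimitive_le h hx

theorem two_rpow_neg_add_two_rpow_le {γ : ℝ} (hγ : 1 ≤ γ) (j : ℕ) :
    (2 : ℝ) ^ (-(j : ℝ)) + 2 ^ (-γ * j) ≤ 2 * (2 ^ (-1 : ℝ)) ^ j := by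
  have : (2 : ℝ) ^ (-γ * j) ≤ 2 ^ (-(j : ℝ)) :=
    Real.rpow_le_rpow_of_exponent_le one_le_two (by nlinarith [j.cast_nonneg (α := ℝ)])
  rw [← Real.rpow_mul_natCast zero_le_two, neg_one_mul]
  linarith

theorem not_holderAt_combPrimitive {α γ β : ℝ} (hγ : 1 ≤ γ) (h : 0 < α + γ) (hβ : α + γ < β) :
    ¬HolderAt (combPrimitive α γ) 0 β := by
  intro hX
  obtain ⟨C, δ, hδ, hbound⟩ := hX.exists_abs_le_of_eventuallyEq_zero
    (eventually_nhdsWithin_of_forall fun x hx => combPrimitive_of_nonpos α γ (le_of_lt hx))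
  set x : ℕ → ℝ := fun j => 2 ^ (-(j : ℝ)) + 2 ^ (-γ * j)
  have hx_pos : ∀ j, 0 < x j := fun j => by positivity
  have hx_le : ∀ j, x j ≤ 2 * (2 ^ (-1 : ℝ)) ^ j := two_rpow_neg_add_two_rpow_le hγ
  have hsmall : ∀ᶠ j : ℕ in atTop, x j < δ := by
    have hlim : Tendsto (fun j : ℕ => 2 * ((2 : ℝ) ^ (-1 : ℝ)) ^ j) atTop (𝓝 0) := by
      simpa using (tendsto_pow_atTop_nhds_zero_of_lt_one (by positivity)
        (Real.rpow_lt_one_of_one_lt_of_neg one_lt_two neg_one_lt_zero)).const_mul 2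
    exact (tendsto_order.1 (squeeze_zero (fun j => (hx_pos j).le) hx_le hlim)).2 δ hδ
  have hq : 1 < (2 : ℝ) ^ (β - (α + γ)) := Real.one_lt_rpow one_lt_two (by linarith)
  have hbounded : ∀ᶠ j : ℕ in atTop, ((2 : ℝ) ^ (β - (α + γ))) ^ j ≤ C * 2 ^ β := by
    filter_upwards [hsmall, eventually_ge_atTop 1] with j hjδ hj
    have hlow := pow_le_combPrimitive h hj
    have hup := hbound (x j) (by rwa [abs_of_pos (hx_pos j)])
    rw [abs_of_nonneg (combPrimitive_nonneg h (hx_pos j).le), abs_of_pos (hx_pos j)] at hup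
    have hxβ : x j ^ β ≤ 2 ^ β * ((2 : ℝ) ^ (-β)) ^ j := by
      calc x j ^ β ≤ (2 * (2 ^ (-1 : ℝ)) ^ j) ^ β :=
            Real.rpow_le_rpow (hx_pos j).le (hx_le j) (by linarith)
        _ = 2 ^ β * ((2 : ℝ) ^ (-β)) ^ j := by
            rw [Real.mul_rpow zero_le_two (by positivity), ← Real.rpow_mul_natCast zero_le_two,
              ← Real.rpow_mul zero_le_two, ← Real.rpow_mul_natCast zero_le_two]
            ring_nf
    have hsplit : ((2 : ℝ) ^ (-(α + γ))) ^ j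
        = ((2 : ℝ) ^ (β - (α + γ))) ^ j * ((2 : ℝ) ^ (-β)) ^ j := by
      rw [← mul_pow, ← Real.rpow_add two_pos]
      ring_nf
    refine le_of_mul_le_mul_right ?_ (by positivity : (0 : ℝ) < ((2 : ℝ) ^ (-β)) ^ j)
    have hC : 0 ≤ C := nonneg_of_mul_nonneg_left
      ((combPrimitive_nonneg h (hx_pos j).le).trans hup) (by positivity)
    rw [← hsplit, mul_assoc]
    exact hlow.trans (hup.trans (mul_le_mul_of_nonneg_left hxβ hC))
  obtain ⟨j, hj, hj'⟩ := (hbounded.and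
    ((tendsto_pow_atTop_atTop_of_one_lt hq).eventually_gt_atTop (C * 2 ^ β))).exists
  exact hj'.not_ge hj

/-- for `γ > 1` and `α + γ > 0`, the primitive `G(x) = ∫_0^x F_{α,γ}` of the
lacunary comb vanishes for `x ≤ 0` and has Hölder exponent `α + γ` at `0`. -/
theorem stmt17 (α γ : ℝ) (hγ : 1 < γ) (h : 0 < α + γ) :
    (∀ x : ℝ, x ≤ 0 → (∫ t in (0 : ℝ)..x, comb α γ t) = 0) ∧
    holderExponent (fun x => ∫ t in (0 : ℝ)..x, comb α γ t) 0 =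
      ((α + γ : ℝ) : EReal) :=
  ⟨fun _ hx => combPrimitive_of_nonpos α γ hx,
    holderExponent_eq_of_holderAt h.le (holderAt_combPrimitive h)
      fun _ hβ => not_holderAt_combPrimitive hγ.le h hβ⟩
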